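/- arXiv:2510.24472 — 2 statements merged into one kernel-verified Lean document; each statement's English description precedes it below -/
import Mathlib

section
/- Let p₀ = (x₀,y₀) and p₁ = (x₁,y₁) be points in {(x,y) : x ≤ y} with w(p₀) ≤ w(p₁) and x₀ + y₀ ≤ x₁ + y₁, where w(x,y) = (y-x)/√2. Define p̃ = ((x₀+x₁)/2 + (y₁-y₀)/2, (x₁-x₀)/2 + (y₀+y₁)/2). Then d_∞(p₀,p₁)·(w(p₀)+w(p₁))/2 ≥ d_∞(p₀,p̃)·(w(p₀)+w(p̃))/2 + d_∞(p̃,p₁)·(w(p̃)+w(p₁))/2. -/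
/-- The standard weighting `w(x,y) = (y-x)/√2`. -/
noncomputable def stdW (p : ℝ × ℝ) : ℝ := (p.2 - p.1) / Real.sqrt 2

/-- The sup-norm (`L∞`) distance on `ℝ²`. -/
def dinf (p q : ℝ × ℝ) : ℝ := max |p.1 - q.1| |p.2 - q.2|

/-- Lemma (breakup): decomposing the segment from `p₀` to `p₁` through the intermediate point
`p̃` (a diagonal-parallel part followed by a diagonal-perpendicular part) does not increase the
weighted length. -/
theorem stmt_1 (x₀ y₀ x₁ y₁ : ℝ) (h₀ : x₀ ≤ y₀) (h₁ : x₁ ≤ y₁)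
    (hw : stdW (x₀, y₀) ≤ stdW (x₁, y₁)) (hsum : x₀ + y₀ ≤ x₁ + y₁) :
    let p₀ : ℝ × ℝ := (x₀, y₀)
    let p₁ : ℝ × ℝ := (x₁, y₁)
    let p' : ℝ × ℝ := ((x₀ + x₁) / 2 + (y₁ - y₀) / 2, (x₁ - x₀) / 2 + (y₀ + y₁) / 2)
    dinf p₀ p₁ * (stdW p₀ + stdW p₁) / 2 ≥
      dinf p₀ p' * (stdW p₀ + stdW p') / 2 + dinf p' p₁ * (stdW p' + stdW p₁) / 2 := by
  intro p₀ p₁ p'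
  have h2 : (0:ℝ) < Real.sqrt 2 := Real.sqrt_pos.mpr (by norm_num)
  simp only [stdW] at hw
  have hw' : y₀ - x₀ ≤ y₁ - x₁ := by
    rw [div_le_div_iff₀ h2 h2] at hw
    nlinarith
  set s : ℝ := (x₁ + y₁ - x₀ - y₀) / 2 with hs
  set t : ℝ := ((y₁ - x₁) - (y₀ - x₀)) / 2 with ht
  have hs0 : 0 ≤ s := by simp only [hs]; linarith
  have ht0 : 0 ≤ t := by simp only [ht]; linarith
  have d01 : dinf p₀ p₁ = s + t := by
    simp only [dinf, p₀, p₁]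
    rw [abs_of_nonpos (show y₀ - y₁ ≤ 0 by linarith)]
    rw [max_eq_right (abs_le.mpr ⟨by linarith, by linarith⟩)]
    simp only [hs, ht]; ring
  have d0p : dinf p₀ p' = s := by
    simp only [dinf, p₀, p']
    rw [abs_of_nonpos (by linarith), abs_of_nonpos (by linarith)]
    rw [max_eq_right (by linarith)]
    ring
  have dp1 : dinf p' p₁ = t := by
    simp only [dinf, p', p₁]
    rw [abs_of_nonneg (by linarith), abs_of_nonpos (by linarith)]
    rw [max_eq_left (by linarith)]
    ring
  have wp : stdW p' = stdW p₀ := by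
    simp only [stdW, p', p₀]
    ring_nf
  rw [d01, d0p, dp1, wp]
  have hww : stdW p₀ ≤ stdW p₁ := hw
  have hw0 : 0 ≤ stdW p₀ := div_nonneg (by simp [p₀]; linarith) h2.le
  nlinarith [hww, hw0, hs0, ht0]
end

section
/- Let γ: [0,1] → ℝ² be a rectifiable curve and w a continuous weighting function. Let γ^{(n)} be the piecewise-linear curve interpolating the points γ(i/n) for 0 ≤ i ≤ n. Then the L∞-weighted line integrals ∫_{γ^{(n)}} w ds converge to ∫_γ w ds as n → ∞. -/
open Filter MeasureTheory

/-- `HasWLen w γ L` : the curve `γ : [0,1] → ℝ²` has weighted line integral `∫_γ w ds = L`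
(w.r.t. `L∞` arc length), as the limit of Riemann-type sums over uniform partitions. -/
def HasWLen (w : ℝ × ℝ → ℝ) (γ : ℝ → ℝ × ℝ) (L : ℝ) : Prop :=
  Tendsto (fun n : ℕ => ∑ i ∈ Finset.range n,
      dinf (γ (((i : ℝ) + 1) / n)) (γ ((i : ℝ) / n)) * w (γ ((i : ℝ) / n)))
    atTop (nhds L)

/-- The weighted line integral of `w` along the piecewise-linear curve `γ⁽ⁿ⁾` interpolating
the points `γ(i/n)`, `0 ≤ i ≤ n`: the sum of the exact segment integrals. -/
noncomputable def plApproxInt (w : ℝ × ℝ → ℝ) (γ : ℝ → ℝ × ℝ) (n : ℕ) : ℝ :=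
  ∑ i ∈ Finset.range n,
    ∫ t in (0:ℝ)..1,
      w ((1 - t) • γ ((i : ℝ) / n) + t • γ (((i : ℝ) + 1) / n))
        * dinf (γ ((i : ℝ) / n)) (γ (((i : ℝ) + 1) / n))

/-!
On the `i`-th segment of `γ⁽ⁿ⁾` the exact integral is `dᵢ` times the average of `w` along the
segment, so it differs from the Riemann term `dᵢ · w(γ(i/n))` by `dᵢ · G(i/n, (i+1)/n)`, where
`G(s, s')` is the average of `w` on `[γ s, γ s']` minus `w(γ s)`. This `G` is continuous on the
compact square `[0,1]²` and vanishes on the diagonal, hence is uniformly small on partitions of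
mesh `1/n`; as the total length `∑ dᵢ` stays bounded, the error tends to `0`.
-/

lemma dinf_eq_dist (p q : ℝ × ℝ) : dinf p q = dist p q := by
  rw [Prod.dist_eq, Real.dist_eq, Real.dist_eq]; rfl

lemma dinf_comm (p q : ℝ × ℝ) : dinf p q = dinf q p := by
  simp only [dinf_eq_dist, dist_comm]

lemma dinf_nonneg (p q : ℝ × ℝ) : 0 ≤ dinf p q := by
  rw [dinf_eq_dist]; exact dist_nonneg

lemma IsCompact.exists_forall_dist_lt_abs_lt_of_eq_zero_diag {X : Type*} [PseudoMetricSpace X]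
    {s : Set X} (hs : IsCompact s) {F : X → X → ℝ}
    (hF : ContinuousOn (Function.uncurry F) (s ×ˢ s)) (hdiag : ∀ x ∈ s, F x x = 0)
    {ε : ℝ} (hε : 0 < ε) :
    ∃ δ > 0, ∀ x ∈ s, ∀ y ∈ s, dist x y < δ → |F x y| < ε := by
  obtain ⟨δ, hδ, hFδ⟩ := Metric.uniformContinuousOn_iff.mp
    ((hs.prod hs).uniformContinuousOn_of_continuous hF) ε hε
  refine ⟨δ, hδ, fun x hx y hy hxy => ?_⟩
  have hclose : dist (x, y) (x, x) < δ := by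
    simpa [Prod.dist_eq, dist_comm, dist_nonneg] using hxy
  simpa [hdiag x hx, Real.dist_eq] using hFδ (x, y) ⟨hx, hy⟩ (x, x) ⟨hx, hx⟩ hclose

theorem tendsto_sum_mul_of_eq_zero_diag {G : ℝ → ℝ → ℝ}
    (hG : ContinuousOn (Function.uncurry G) (Set.Icc 0 1 ×ˢ Set.Icc 0 1))
    (hdiag : ∀ s ∈ Set.Icc (0 : ℝ) 1, G s s = 0)
    {d : ℕ → ℕ → ℝ} (hd : ∀ n i, 0 ≤ d n i) {C : ℝ} (hC : ∀ n, ∑ i ∈ Finset.range n, d n i ≤ C) :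
    Tendsto (fun n : ℕ => ∑ i ∈ Finset.range n, G (i / n) ((i + 1) / n) * d n i)
      atTop (nhds 0) := by
  rw [Metric.tendsto_atTop]
  intro ε hε
  have hC1 : 0 < |C| + 1 := by positivity
  obtain ⟨δ, hδ, hGδ⟩ := isCompact_Icc.exists_forall_dist_lt_abs_lt_of_eq_zero_diag hG hdiag
    (div_pos hε hC1)
  obtain ⟨N, hN⟩ := exists_nat_one_div_lt hδ
  refine ⟨N + 1, fun n hn => ?_⟩
  have hn : (N : ℝ) + 1 ≤ n := by exact_mod_cast hn
  have hn0 : (0 : ℝ) < n := by linarith [N.cast_nonneg (α := ℝ)]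
  have hterm : ∀ i ∈ Finset.range n, |G (i / n) ((i + 1) / n)| ≤ ε / (|C| + 1) := by
    intro i hi
    have hi : (i : ℝ) + 1 ≤ n := by exact_mod_cast Finset.mem_range.mp hi
    have hmesh : dist ((i : ℝ) / n) ((i + 1) / n) < δ := by
      rw [Real.dist_eq, div_sub_div_same, sub_add_cancel_left, neg_div, abs_neg,
        abs_of_pos (by positivity)]
      exact lt_of_le_of_lt (one_div_le_one_div_of_le (by positivity) hn) hN
    refine (hGδ _ ⟨by positivity, ?_⟩ _ ⟨by positivity, ?_⟩ hmesh).le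
    all_goals rw [div_le_one hn0]; linarith
  calc dist (∑ i ∈ Finset.range n, G (i / n) ((i + 1) / n) * d n i) 0
      = |∑ i ∈ Finset.range n, G (i / n) ((i + 1) / n) * d n i| := by
        rw [Real.dist_eq, sub_zero]
    _ ≤ ∑ i ∈ Finset.range n, ε / (|C| + 1) * d n i := by
        refine (Finset.abs_sum_le_sum_abs _ _).trans (Finset.sum_le_sum fun i hi => ?_)
        rw [abs_mul, abs_of_nonneg (hd n i)]
        exact mul_le_mul_of_nonneg_right (hterm i hi) (hd n i)
    _ = ε / (|C| + 1) * ∑ i ∈ Finset.range n, d n i := (Finset.mul_sum _ _ _).symm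
    _ ≤ ε / (|C| + 1) * |C| := by gcongr; exact (hC n).trans (le_abs_self C)
    _ < ε := by
        rw [div_mul_eq_mul_div, div_lt_iff₀ hC1]
        nlinarith

section SegmentAverage

variable {E : Type*} [AddCommGroup E] [Module ℝ E]

noncomputable def segmentAverage (w : E → ℝ) (a b : E) : ℝ :=
  ∫ t in (0 : ℝ)..1, w ((1 - t) • a + t • b)

@[simp]
lemma segmentAverage_self (w : E → ℝ) (a : E) : segmentAverage w a a = w a := by
  simp [segmentAverage, ← add_smul]

lemma continuous_segmentAverage [TopologicalSpace E] [IsTopologicalAddGroup E]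
    [ContinuousSMul ℝ E] {w : E → ℝ} (hw : Continuous w) :
    Continuous fun p : E × E => segmentAverage w p.1 p.2 :=
  intervalIntegral.continuous_parametric_intervalIntegral_of_continuous' (by fun_prop) 0 1

end SegmentAverage

lemma plApproxInt_eq_sum_segmentAverage (w : ℝ × ℝ → ℝ) (γ : ℝ → ℝ × ℝ) (n : ℕ) :
    plApproxInt w γ n = ∑ i ∈ Finset.range n,
      segmentAverage w (γ (i / n)) (γ ((i + 1) / n)) * dinf (γ ((i + 1) / n)) (γ (i / n)) := by
  simp only [plApproxInt, segmentAverage, intervalIntegral.integral_mul_const, dinf_comm]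

/-- If `γ` is a rectifiable curve (continuous, with finite `L∞` arc length) whose weighted
line integral (w.r.t. a continuous weighting `w`) is `L`, then the weighted line integrals of
its piecewise-linear interpolations `γ⁽ⁿ⁾` converge to `L` as `n → ∞`. -/
theorem stmt_18 (γ : ℝ → ℝ × ℝ) (w : ℝ × ℝ → ℝ) (L : ℝ)
    (hγ : Continuous γ) (hw : Continuous w)
    (hrect : ∃ C : ℝ, ∀ n : ℕ, ∑ i ∈ Finset.range n,
        dinf (γ (((i : ℝ) + 1) / n)) (γ ((i : ℝ) / n)) ≤ C)
    (hlen : HasWLen w γ L) :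
    Tendsto (fun n : ℕ => plApproxInt w γ n) atTop (nhds L) := by
  obtain ⟨C, hC⟩ := hrect
  set G : ℝ → ℝ → ℝ := fun s s' => segmentAverage w (γ s) (γ s') - w (γ s)
  have hG : Continuous (Function.uncurry G) :=
    ((continuous_segmentAverage hw).comp (hγ.prodMap hγ)).sub (hw.comp (hγ.comp continuous_fst))
  have herr := tendsto_sum_mul_of_eq_zero_diag hG.continuousOn (fun s _ => by simp [G])
    (fun n i => dinf_nonneg _ _) hC
  convert herr.add hlen using 1
  · ext n
    simp only [plApproxInt_eq_sum_segmentAverage, G, ← Finset.sum_add_distrib]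
    exact Finset.sum_congr rfl fun i _ => by ring
  · rw [zero_add]
end
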